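/- arXiv:1705.10017 — 4 statements merged into one kernel-verified Lean document; each statement's English description precedes it below -/
import Mathlib

section
/- The function g(κ) = κ·Erf(1,κ)/Φ(1,κ), where Φ(t,ξ) = (2πt)^{-1/2} exp(-ξ²/(2t)) is the standard heat kernel and Erf(t,ξ) = ∫_ξ^∞ Φ(t,ζ)dζ its tail, is strictly increasing on (0,∞) with g(0⁺)=0 and g(κ)→1 as κ→∞. Consequently, for every ρ∈(0,1) there is a unique κ_ρ>0 with g(κ_ρ)=ρ. -/
open Real Filter Set Topology MeasureTheory

/-- The standard heat kernel `Φ(t,ξ) = (2πt)^{-1/2} exp(-ξ²/(2t))`. -/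
noncomputable def heatK (t ξ : ℝ) : ℝ :=
  (1 / Real.sqrt (2 * Real.pi * t)) * Real.exp (-ξ ^ 2 / (2 * t))

/-- The tail distribution function `Erf(t,ξ) = ∫_ξ^∞ Φ(t,ζ) dζ`. -/
noncomputable def erfT (t ξ : ℝ) : ℝ := ∫ ζ in Set.Ioi ξ, heatK t ζ

/-- `g(κ) = κ · Erf(1,κ) / Φ(1,κ)`. -/
noncomputable def gfun (κ : ℝ) : ℝ := κ * erfT 1 κ / heatK 1 κ

/-!
Both Mills-ratio bounds `κ Φ(κ) / (1 + κ²) < Erf(κ) < Φ(κ) / κ` come from integrating exact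
derivatives over `(κ, ∞)`: `ζ Φ(ζ) = -Φ'(ζ)` integrates to `Φ(κ)` and dominates `κ Φ(ζ)`, while
`(1 + ζ⁻²) Φ(ζ) = -(Φ(ζ) / ζ)'` integrates to `Φ(κ) / κ` and is dominated by
`κ⁻² (1 + κ²) Φ(ζ)`. Since `Φ' = -ξ Φ` and `Erf' = -Φ`, `g' = ((1 + κ²) Erf - κ Φ) / Φ`, which is
positive by the lower bound. The bounds also squeeze `κ² / (1 + κ²) < g(κ) < 1`, giving the limit
at `∞`; the limit at `0⁺` is continuity with `g(0) = 0`, and the intermediate value theorem with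
strict monotonicity gives existence and uniqueness of `κ_ρ`.
-/

lemma setIntegral_Ioi_pos {f : ℝ → ℝ} {a : ℝ} (hf : IntegrableOn f (Ioi a))
    (hpos : ∀ x ∈ Ioi a, 0 < f x) : 0 < ∫ x in Ioi a, f x := by
  rw [setIntegral_pos_iff_support_of_nonneg_ae
    ((ae_restrict_iff' measurableSet_Ioi).2 (.of_forall fun x hx => (hpos x hx).le)) hf]
  refine lt_of_lt_of_le ?_ (measure_mono fun x hx => ⟨(hpos x hx).ne', hx⟩)
  simp

lemma setIntegral_Ioi_lt_setIntegral_Ioi {f g : ℝ → ℝ} {a : ℝ} (hf : IntegrableOn f (Ioi a))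
    (hg : IntegrableOn g (Ioi a)) (hfg : ∀ x ∈ Ioi a, f x < g x) :
    ∫ x in Ioi a, f x < ∫ x in Ioi a, g x := by
  rw [← sub_pos, ← integral_sub hg hf]
  exact setIntegral_Ioi_pos (hg.sub hf) fun x hx => sub_pos.2 (hfg x hx)

lemma hasDerivAt_integral_Ioi {f : ℝ → ℝ} {x : ℝ} (hf : Integrable f) (hx : ContinuousAt f x) :
    HasDerivAt (fun y => ∫ t in Ioi y, f t) (-f x) x := by
  have hsplit : (fun y => ∫ t in Ioi y, f t) = fun y => (∫ t in Ioi 0, f t) - ∫ t in 0..y, f t :=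
    funext fun y => by
      rw [← intervalIntegral.integral_Ioi_sub_Ioi' hf.integrableOn hf.integrableOn]; ring
  rw [hsplit]
  exact (intervalIntegral.integral_hasDerivAt_right hf.intervalIntegrable
    hf.aestronglyMeasurable.stronglyMeasurableAtFilter hx).const_sub _

lemma heatK_one_eq : heatK 1 = fun ξ => (√(2 * π))⁻¹ * exp (-(1 / 2) * ξ ^ 2) := by
  ext ξ
  rw [heatK, mul_one, one_div]
  ring_nf

lemma heatK_one_pos (ξ : ℝ) : 0 < heatK 1 ξ := by
  rw [heatK_one_eq]
  have : 0 < √(2 * π) := by positivity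
  positivity

lemma integrable_heatK_one : Integrable (heatK 1) := by
  simpa only [heatK_one_eq] using
    (integrable_exp_neg_mul_sq (by norm_num : (0 : ℝ) < 1 / 2)).const_mul (√(2 * π))⁻¹

lemma integrable_mul_heatK_one : Integrable fun ξ => ξ * heatK 1 ξ := by
  simpa only [heatK_one_eq, mul_left_comm] using
    (integrable_mul_exp_neg_mul_sq (by norm_num : (0 : ℝ) < 1 / 2)).const_mul (√(2 * π))⁻¹

lemma hasDerivAt_heatK_one (ξ : ℝ) : HasDerivAt (heatK 1) (-(ξ * heatK 1 ξ)) ξ := by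
  have := (((hasDerivAt_pow 2 ξ).const_mul (-(1 / 2))).exp).const_mul (√(2 * π))⁻¹
  simp only [heatK_one_eq]
  exact this.congr_deriv (by push_cast; ring)

lemma tendsto_heatK_one_atTop : Tendsto (heatK 1) atTop (𝓝 0) := by
  rw [heatK_one_eq]
  simpa using (tendsto_exp_neg_atTop_nhds_zero.comp
    ((tendsto_pow_atTop two_ne_zero).const_mul_atTop (by norm_num : (0 : ℝ) < 1 / 2))).const_mul
    (√(2 * π))⁻¹

lemma integral_Ioi_mul_heatK_one (κ : ℝ) : ∫ ζ in Ioi κ, ζ * heatK 1 ζ = heatK 1 κ := by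
  have := integral_Ioi_of_hasDerivAt_of_tendsto' (a := κ)
    (fun x _ => (hasDerivAt_heatK_one x).fun_neg.congr_deriv (neg_neg _))
    integrable_mul_heatK_one.integrableOn tendsto_heatK_one_atTop.neg
  simpa using this

lemma hasDerivAt_neg_heatK_one_div {x : ℝ} (hx : x ≠ 0) :
    HasDerivAt (fun ζ => -(heatK 1 ζ / ζ)) ((1 + (x ^ 2)⁻¹) * heatK 1 x) x := by
  refine ((hasDerivAt_heatK_one x).fun_div (hasDerivAt_id x) hx).fun_neg.congr_deriv ?_
  simp only [id]
  field_simp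
  ring

lemma tendsto_heatK_one_div_atTop : Tendsto (fun ζ => heatK 1 ζ / ζ) atTop (𝓝 0) := by
  simpa [div_eq_mul_inv] using tendsto_heatK_one_atTop.mul tendsto_inv_atTop_zero

lemma integrableOn_one_add_inv_sq_mul_heatK_one {κ : ℝ} (hκ : 0 < κ) :
    IntegrableOn (fun ζ => (1 + (ζ ^ 2)⁻¹) * heatK 1 ζ) (Ioi κ) :=
  integrableOn_Ioi_deriv_of_nonneg' (fun x hx => hasDerivAt_neg_heatK_one_div (hκ.trans_le hx).ne')
    (fun x _ => by have := heatK_one_pos x; positivity) tendsto_heatK_one_div_atTop.neg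

lemma integral_Ioi_one_add_inv_sq_mul_heatK_one {κ : ℝ} (hκ : 0 < κ) :
    ∫ ζ in Ioi κ, (1 + (ζ ^ 2)⁻¹) * heatK 1 ζ = heatK 1 κ / κ := by
  have := integral_Ioi_of_hasDerivAt_of_tendsto'
    (fun x hx => hasDerivAt_neg_heatK_one_div (hκ.trans_le hx).ne')
    (integrableOn_one_add_inv_sq_mul_heatK_one hκ) tendsto_heatK_one_div_atTop.neg
  simpa using this

lemma mul_erfT_one_lt_heatK_one (κ : ℝ) : κ * erfT 1 κ < heatK 1 κ :=
  calc κ * erfT 1 κ = ∫ ζ in Ioi κ, κ * heatK 1 ζ := (integral_const_mul κ _).symm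
    _ < ∫ ζ in Ioi κ, ζ * heatK 1 ζ :=
      setIntegral_Ioi_lt_setIntegral_Ioi (integrable_heatK_one.const_mul κ).integrableOn
        integrable_mul_heatK_one.integrableOn
        fun ζ hζ => mul_lt_mul_of_pos_right hζ (heatK_one_pos ζ)
    _ = heatK 1 κ := integral_Ioi_mul_heatK_one κ

lemma mul_heatK_one_lt_one_add_sq_mul_erfT_one {κ : ℝ} (hκ : 0 < κ) :
    κ * heatK 1 κ < (1 + κ ^ 2) * erfT 1 κ :=
  calc κ * heatK 1 κ = κ ^ 2 * (heatK 1 κ / κ) := by field_simp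
    _ = ∫ ζ in Ioi κ, κ ^ 2 * ((1 + (ζ ^ 2)⁻¹) * heatK 1 ζ) := by
      rw [integral_const_mul, integral_Ioi_one_add_inv_sq_mul_heatK_one hκ]
    _ < ∫ ζ in Ioi κ, (1 + κ ^ 2) * heatK 1 ζ := by
      refine setIntegral_Ioi_lt_setIntegral_Ioi
        ((integrableOn_one_add_inv_sq_mul_heatK_one hκ).const_mul _)
        (integrable_heatK_one.const_mul _).integrableOn fun ζ hζ => ?_
      have hratio : κ ^ 2 * (ζ ^ 2)⁻¹ < 1 := by
        rw [← div_eq_mul_inv, div_lt_one (pow_pos (hκ.trans hζ) 2)]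
        exact pow_lt_pow_left₀ hζ hκ.le two_ne_zero
      calc κ ^ 2 * ((1 + (ζ ^ 2)⁻¹) * heatK 1 ζ)
          = (κ ^ 2 + κ ^ 2 * (ζ ^ 2)⁻¹) * heatK 1 ζ := by ring
        _ < (1 + κ ^ 2) * heatK 1 ζ := mul_lt_mul_of_pos_right (by linarith) (heatK_one_pos ζ)
    _ = (1 + κ ^ 2) * erfT 1 κ := integral_const_mul _ _

lemma hasDerivAt_erfT_one (κ : ℝ) : HasDerivAt (erfT 1) (-heatK 1 κ) κ :=
  hasDerivAt_integral_Ioi integrable_heatK_one (hasDerivAt_heatK_one κ).continuousAt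

lemma hasDerivAt_gfun (κ : ℝ) :
    HasDerivAt gfun (((1 + κ ^ 2) * erfT 1 κ - κ * heatK 1 κ) / heatK 1 κ) κ := by
  refine (((hasDerivAt_id κ).fun_mul (hasDerivAt_erfT_one κ)).fun_div (hasDerivAt_heatK_one κ)
    (heatK_one_pos κ).ne').congr_deriv ?_
  have hΦ := (heatK_one_pos κ).ne'
  simp only [id]
  field_simp
  ring

lemma continuous_gfun : Continuous gfun :=
  continuous_iff_continuousAt.2 fun κ => (hasDerivAt_gfun κ).continuousAt

lemma strictMonoOn_gfun : StrictMonoOn gfun (Ioi 0) := by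
  refine strictMonoOn_of_deriv_pos (convex_Ioi 0) continuous_gfun.continuousOn fun κ hκ => ?_
  rw [interior_Ioi] at hκ
  rw [(hasDerivAt_gfun κ).deriv]
  exact div_pos (sub_pos.2 (mul_heatK_one_lt_one_add_sq_mul_erfT_one hκ)) (heatK_one_pos κ)

lemma gfun_lt_one (κ : ℝ) : gfun κ < 1 :=
  (div_lt_one (heatK_one_pos κ)).2 (mul_erfT_one_lt_heatK_one κ)

lemma sq_div_one_add_sq_lt_gfun {κ : ℝ} (hκ : 0 < κ) : κ ^ 2 / (1 + κ ^ 2) < gfun κ := by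
  rw [gfun, div_lt_div_iff₀ (by positivity) (heatK_one_pos κ)]
  linarith [mul_lt_mul_of_pos_left (mul_heatK_one_lt_one_add_sq_mul_erfT_one hκ) hκ]

lemma gfun_zero : gfun 0 = 0 := by simp [gfun]

lemma tendsto_gfun_nhdsGT_zero : Tendsto gfun (𝓝[>] 0) (𝓝 0) :=
  tendsto_nhdsWithin_of_tendsto_nhds <| by simpa only [gfun_zero] using continuous_gfun.tendsto 0

lemma tendsto_gfun_atTop : Tendsto gfun atTop (𝓝 1) := by
  have hlower : Tendsto (fun κ : ℝ => κ ^ 2 / (1 + κ ^ 2)) atTop (𝓝 1) := by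
    have := tendsto_const_nhds (x := (1 : ℝ)) |>.sub <| tendsto_inv_atTop_zero.comp <|
      tendsto_atTop_add_const_left atTop 1 (tendsto_pow_atTop two_ne_zero)
    rw [sub_zero] at this
    refine this.congr fun κ => ?_
    have : 1 + κ ^ 2 ≠ 0 := by positivity
    simp only [Function.comp_apply]
    field_simp
    ring
  refine tendsto_of_tendsto_of_tendsto_of_le_of_le' hlower tendsto_const_nhds ?_
    (.of_forall fun κ => (gfun_lt_one κ).le)
  filter_upwards [eventually_gt_atTop 0] with κ hκ using (sq_div_one_add_sq_lt_gfun hκ).le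

lemma existsUnique_gfun_eq {ρ : ℝ} (hρ : ρ ∈ Ioo 0 1) : ∃! κ, 0 < κ ∧ gfun κ = ρ := by
  obtain ⟨b, hρb, hb⟩ :=
    ((tendsto_gfun_atTop.eventually (eventually_gt_nhds hρ.2)).and (eventually_gt_atTop 0)).exists
  obtain ⟨κ, hκ, rfl⟩ :=
    intermediate_value_Ioo hb.le continuous_gfun.continuousOn ⟨by rw [gfun_zero]; exact hρ.1, hρb⟩
  exact ⟨κ, ⟨hκ.1, rfl⟩, fun y ⟨hy, hyκ⟩ => strictMonoOn_gfun.injOn hy hκ.1 hyκ⟩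

theorem stmt0 :
    StrictMonoOn gfun (Set.Ioi 0) ∧
    Tendsto gfun (nhdsWithin 0 (Set.Ioi 0)) (nhds 0) ∧
    Tendsto gfun atTop (nhds 1) ∧
    ∀ ρ ∈ Set.Ioo (0:ℝ) 1, ∃! κ : ℝ, 0 < κ ∧ gfun κ = ρ :=
  ⟨strictMonoOn_gfun, tendsto_gfun_nhdsGT_zero, tendsto_gfun_atTop,
    fun _ => existsUnique_gfun_eq⟩
end

section
/- The real inequality (1+δ)·log(1+δ) − δ ≥ δ²/(|δ| + 2) holds for all δ ≥ −1 (with the convention 0·log 0 = 0 at δ = −1). -/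
/-!
With `x = 1 + δ` the right-hand side is `klFun x = x log x + 1 - x`, which vanishes to second
order at `x = 1`. For `x ≥ 1` the bound comes from the Padé-type estimate
`log x ≥ 2 (x - 1) / (x + 1)`; for `x ∈ [0, 1]` the second derivative `1 / x` of `klFun` is at
least `1`, so `klFun x ≥ (x - 1)² / 2 ≥ δ² / (|δ| + 2)`.
-/

open Real Set

namespace InformationTheory

lemma sq_sub_one_div_add_one_le_klFun {x : ℝ} (hx : 1 ≤ x) :
    (x - 1) ^ 2 / (x + 1) ≤ klFun x := by
  have hlog := le_log_one_add_of_nonneg (sub_nonneg.mpr hx)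
  rw [add_sub_cancel, show x - 1 + 2 = x + 1 by ring] at hlog
  calc (x - 1) ^ 2 / (x + 1) = x * (2 * (x - 1) / (x + 1)) + 1 - x := by
        field_simp
        ring
    _ ≤ x * log x + 1 - x := by gcongr
    _ = klFun x := (klFun_apply x).symm

lemma sq_sub_one_div_two_le_klFun {x : ℝ} (hx₀ : 0 ≤ x) (hx₁ : x ≤ 1) :
    (x - 1) ^ 2 / 2 ≤ klFun x := by
  have hderiv {y : ℝ} (hy : y ∈ Ioo 0 1) :
      HasDerivAt (fun y ↦ klFun y - (y - 1) ^ 2 / 2) (log y - (y - 1)) y := by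
    have hsq : HasDerivAt (fun y ↦ (y - 1) ^ 2 / 2) (y - 1) y :=
      ((((hasDerivAt_id' y).sub_const 1).fun_pow 2).div_const 2).congr_deriv (by norm_num)
    exact (hasDerivAt_klFun hy.1.ne').sub hsq
  have hanti : AntitoneOn (fun y ↦ klFun y - (y - 1) ^ 2 / 2) (Icc 0 1) := by
    refine antitoneOn_of_deriv_nonpos (convex_Icc 0 1) (by fun_prop) ?_ ?_ <;>
      rw [interior_Icc] <;> intro y hy
    · exact (hderiv hy).differentiableAt.differentiableWithinAt
    · rw [(hderiv hy).deriv]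
      linarith [log_le_sub_one_of_pos hy.1]
  have := hanti ⟨hx₀, hx₁⟩ ⟨zero_le_one, le_rfl⟩ hx₁
  simp only [klFun_one] at this
  linarith

end InformationTheory

open InformationTheory in
theorem stmt7 (δ : ℝ) (h : -1 ≤ δ) :
    δ ^ 2 / (|δ| + 2) ≤ (1 + δ) * Real.log (1 + δ) - δ := by
  have hkl : (1 + δ) * Real.log (1 + δ) - δ = klFun (1 + δ) := by rw [klFun_apply]; ring
  rw [hkl]
  rcases le_total 0 δ with hδ | hδ
  · have := sq_sub_one_div_add_one_le_klFun (x := 1 + δ) (by linarith)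
    rw [abs_of_nonneg hδ]
    convert this using 2 <;> ring
  · have := sq_sub_one_div_two_le_klFun (x := 1 + δ) (by linarith) (by linarith)
    rw [add_sub_cancel_left] at this
    calc δ ^ 2 / (|δ| + 2) ≤ δ ^ 2 / 2 := by gcongr; linarith [abs_nonneg δ]
      _ ≤ klFun (1 + δ) := this
end

section
/- (Discrete maximum principle on a bounded space-time box) Let x₁ < x₂ be integers and T < ∞. Suppose u: [0,T] × ([x₁,x₂]∩ℤ) → ℝ is continuous in t, C¹ in t on (0,T) for each interior site, and satisfies ∂_t u(t,x) = (1/2)(u(t,x+1) + u(t,x−1) − 2u(t,x)) for t ∈ (0,T) and x₁ < x < x₂. If u(0,x) ≥ 0 for all x₁ < x < x₂ and u(t,x₁) ≥ 0, u(t,x₂) ≥ 0 for all t ∈ [0,T], then u(t,x) ≥ 0 for all (t,x) ∈ [0,T] × ([x₁,x₂]∩ℤ). -/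
open Set Filter Topology

/-- One-sided Fermat: if `f` has derivative `d` at `a`, `0 < a ≤ b`, and `a` is a minimum
of `f` on `[0,b]`, then `d ≤ 0` (looking at slopes from the left). -/
lemma deriv_nonpos_of_min_left (f : ℝ → ℝ) (d a b : ℝ) (ha : 0 < a) (hab : a ≤ b)
    (hf : HasDerivAt f d a) (hmin : ∀ s ∈ Set.Icc (0:ℝ) b, f a ≤ f s) : d ≤ 0 := by
  have hcl : a ∈ closure (Set.Ioo 0 a) := by
    rw [closure_Ioo (by linarith : (0:ℝ) ≠ a)]
    exact ⟨le_of_lt ha, le_refl a⟩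
  have hne : (𝓝[Set.Ioo 0 a] a).NeBot := mem_closure_iff_nhdsWithin_neBot.1 hcl
  have hds : HasDerivWithinAt f d (Set.Ioo 0 a) a := hf.hasDerivWithinAt
  rw [hasDerivWithinAt_iff_tendsto_slope] at hds
  have hdiff : Set.Ioo 0 a \ {a} = Set.Ioo 0 a := by
    apply Set.diff_singleton_eq_self
    simp
  rw [hdiff] at hds
  refine le_of_tendsto hds ?_
  filter_upwards [eventually_mem_nhdsWithin] with s hs
  have hs1 : f a ≤ f s := hmin s ⟨le_of_lt hs.1, by linarith [hs.2]⟩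
  rw [slope_def_field]
  exact div_nonpos_of_nonneg_of_nonpos (by linarith) (by linarith [hs.2])

theorem stmt8 (x₁ x₂ : ℤ) (hx : x₁ < x₂) (T : ℝ) (hT : 0 ≤ T) (u : ℝ → ℤ → ℝ)
    (hcont : ∀ x ∈ Set.Icc x₁ x₂, ContinuousOn (fun t => u t x) (Set.Icc 0 T))
    -- discrete heat equation `∂_t u(t,x) = (1/2)(u(t,x+1)+u(t,x−1)−2u(t,x))` in the interior
    (hheat : ∀ x : ℤ, x₁ < x → x < x₂ → ∀ t ∈ Set.Ioo (0:ℝ) T,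
      HasDerivAt (fun s => u s x) ((1/2) * (u t (x+1) + u t (x-1) - 2 * u t x)) t)
    (hinit : ∀ x : ℤ, x₁ < x → x < x₂ → 0 ≤ u 0 x)
    (hbdy : ∀ t ∈ Set.Icc (0:ℝ) T, 0 ≤ u t x₁ ∧ 0 ≤ u t x₂) :
    ∀ t ∈ Set.Icc (0:ℝ) T, ∀ x ∈ Set.Icc x₁ x₂, 0 ≤ u t x := by
  -- Step 0 : the case t = 0 directly.
  have hzero : ∀ x ∈ Set.Icc x₁ x₂, 0 ≤ u 0 x := by
    intro x hxm
    rcases eq_or_lt_of_le hxm.1 with h1 | h1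
    · exact h1 ▸ (hbdy 0 ⟨le_refl 0, hT⟩).1
    rcases eq_or_lt_of_le hxm.2 with h2 | h2
    · exact h2 ▸ (hbdy 0 ⟨le_refl 0, hT⟩).2
    exact hinit x h1 h2
  -- Key perturbation lemma.
  have aux : ∀ t₀ : ℝ, 0 ≤ t₀ → t₀ < T → ∀ ε : ℝ, 0 < ε →
      ∀ t ∈ Set.Icc (0:ℝ) t₀, ∀ x ∈ Set.Icc x₁ x₂, 0 ≤ u t x + ε * t := by
    intro t₀ ht₀0 ht₀T ε hε
    set v : ℝ → ℤ → ℝ := fun t x => u t x + ε * t with hv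
    have hIcc : Set.Icc (0:ℝ) t₀ ⊆ Set.Icc 0 T := Set.Icc_subset_Icc le_rfl (le_of_lt ht₀T)
    -- for each site x, pick a time minimizer of v · x on [0,t₀]
    have hex : ∀ x ∈ Finset.Icc x₁ x₂, ∃ t ∈ Set.Icc (0:ℝ) t₀,
        IsMinOn (fun s => v s x) (Set.Icc 0 t₀) t := by
      intro x hxm
      have hxm' : x ∈ Set.Icc x₁ x₂ := by simpa using hxm
      have hc : ContinuousOn (fun s => v s x) (Set.Icc 0 t₀) :=
        ((hcont x hxm').mono hIcc).add ((continuous_const.mul continuous_id).continuousOn)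
      exact isCompact_Icc.exists_isMinOn (Set.nonempty_Icc.2 ht₀0) hc
    choose! τ hτmem hτmin using hex
    -- pick a site minimizing the site-wise minimum
    obtain ⟨z, hzmem, hzmin⟩ := Finset.exists_min_image (Finset.Icc x₁ x₂)
      (fun x => v (τ x) x) ⟨x₁, by simp [le_of_lt hx]⟩
    set M : ℝ := v (τ z) z with hM
    have hMval : M = u (τ z) z + ε * τ z := rfl
    have hglobal : ∀ t ∈ Set.Icc (0:ℝ) t₀, ∀ x ∈ Set.Icc x₁ x₂, M ≤ v t x := by
      intro t ht x hxm
      have hxm' : x ∈ Finset.Icc x₁ x₂ := by simpa using hxm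
      exact le_trans (hzmin x hxm') (hτmin x hxm' ht)
    have hMnn : 0 ≤ M := by
      by_contra hMneg
      push_neg at hMneg
      have hzm : z ∈ Set.Icc x₁ x₂ := by simpa using hzmem
      have htz := hτmem z hzmem
      have htzT : τ z ∈ Set.Icc (0:ℝ) T := hIcc htz
      -- z is not a boundary site
      have hz1 : x₁ < z := by
        rcases eq_or_lt_of_le hzm.1 with h | h
        · exfalso
          have h1 : (0:ℝ) ≤ v (τ z) x₁ := by
            simp only [hv]
            have := mul_nonneg (le_of_lt hε) htz.1
            linarith [(hbdy (τ z) htzT).1]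
          rw [h] at h1
          rw [hM] at hMneg
          linarith
        · exact h
      have hz2 : z < x₂ := by
        rcases eq_or_lt_of_le hzm.2 with h | h
        · exfalso
          have h1 : (0:ℝ) ≤ v (τ z) x₂ := by
            simp only [hv]
            have := mul_nonneg (le_of_lt hε) htz.1
            linarith [(hbdy (τ z) htzT).2]
          rw [← h] at h1
          rw [hM] at hMneg
          linarith
        · exact h
      -- the minimizing time is positive
      have htpos : 0 < τ z := by
        rcases eq_or_lt_of_le htz.1 with h | h
        · exfalso
          have h2 : 0 ≤ u 0 z := hinit z hz1 hz2
          rw [hMval, ← h] at hMneg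
          linarith
        · exact h
      have htIoo : τ z ∈ Set.Ioo (0:ℝ) T := ⟨htpos, lt_of_le_of_lt htz.2 ht₀T⟩
      -- derivative of v at the minimizer
      have hd : HasDerivAt (fun s => v s z)
          ((1/2) * (u (τ z) (z+1) + u (τ z) (z-1) - 2 * u (τ z) z) + ε) (τ z) := by
        have h1 := hheat z hz1 hz2 (τ z) htIoo
        have h2 : HasDerivAt (fun s : ℝ => ε * s) ε (τ z) := by
          simpa using (hasDerivAt_id (τ z)).const_mul ε
        exact h1.add h2
      -- the discrete Laplacian at the minimum is nonnegative
      have hnb1 : M ≤ v (τ z) (z+1) :=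
        hglobal (τ z) htz (z+1) ⟨by omega, by omega⟩
      have hnb2 : M ≤ v (τ z) (z-1) :=
        hglobal (τ z) htz (z-1) ⟨by omega, by omega⟩
      have hlap : 0 ≤ u (τ z) (z+1) + u (τ z) (z-1) - 2 * u (τ z) z := by
        simp only [hv] at hnb1 hnb2
        rw [hMval] at hnb1 hnb2
        linarith
      -- one-sided Fermat gives a contradiction
      have hle : (1/2) * (u (τ z) (z+1) + u (τ z) (z-1) - 2 * u (τ z) z) + ε ≤ 0 := by
        refine deriv_nonpos_of_min_left _ _ _ t₀ htpos htz.2 hd ?_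
        intro s hs
        exact hglobal s hs z hzm
      linarith
    intro t ht x hxm
    exact le_trans hMnn (hglobal t ht x hxm)
  -- From aux : nonnegativity for all t < T.
  have hlt : ∀ t ∈ Set.Ico (0:ℝ) T, ∀ x ∈ Set.Icc x₁ x₂, 0 ≤ u t x := by
    intro t ht x hxm
    have h0 : ∀ ε : ℝ, 0 < ε → 0 ≤ u t x + ε := by
      intro ε hε
      have ht1 : 0 < t + 1 := by linarith [ht.1]
      have hε' : 0 < ε / (t + 1) := div_pos hε ht1
      have h1 := aux t ht.1 ht.2 _ hε' t ⟨ht.1, le_refl t⟩ x hxm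
      have h2 : ε / (t + 1) * t ≤ ε := by
        rw [div_mul_eq_mul_div, div_le_iff₀ ht1]
        nlinarith [ht.1]
      linarith
    by_contra hneg
    push_neg at hneg
    have := h0 (-u t x / 2) (by linarith)
    linarith
  -- Final assembly.
  intro t ht x hxm
  rcases lt_or_eq_of_le ht.2 with h | h
  · exact hlt t ⟨ht.1, h⟩ x hxm
  rcases eq_or_lt_of_le hT with h0 | h0
  · -- T = 0, so t = 0
    have : t = 0 := by rw [h, ← h0]
    exact this ▸ hzero x hxm
  · -- t = T > 0 : take limits from the left
    subst h
    have hcw : ContinuousWithinAt (fun s => u s x) (Set.Ico 0 t) t :=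
      ((hcont x hxm) t ht).mono Set.Ico_subset_Icc_self
    have hne : (𝓝[Set.Ico 0 t] t).NeBot := by
      refine mem_closure_iff_nhdsWithin_neBot.1 ?_
      rw [closure_Ico (by linarith : (0:ℝ) ≠ t)]
      exact ⟨ht.1, le_refl t⟩
    refine ge_of_tendsto hcw ?_
    filter_upwards [eventually_mem_nhdsWithin] with s hs
    exact hlt s hs x hxm
end

section
/- For each v > 0 there exists a unique v' > 0 solving v = (cosh(v') − 1)/v', and the function u(t,x) := exp(v'(v·t − x)) is a traveling-wave solution of the discrete heat equation ∂_t u(t,x) = (1/2)(u(t,x+1) + u(t,x−1) − 2u(t,x)) for all t ∈ ℝ and x ∈ ℤ. -/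
/-!
The map `w ↦ (cosh w - 1) / w` is the slope of the secant of the strictly convex function `cosh`
from `0` to `w`, hence strictly increasing on `w > 0`; it tends to `cosh' 0 = 0` as `w → 0⁺` and
is at least `w / 4`, so it takes every value `v > 0` exactly once. For `u = exp (w (v t - x))` both
sides of the equation are multiples of `u`: `∂ₜu = w v u` and `½ Δu = (cosh w - 1) u`.
-/

open Real Set Filter Topology

theorem strictConvexOn_cosh : StrictConvexOn ℝ univ cosh :=
  strictConvexOn_univ_of_deriv2_pos continuous_cosh fun x => by
    simpa [Function.iterate_succ, Real.deriv_cosh, Real.deriv_sinh] using cosh_pos x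

theorem slope_cosh_zero (w : ℝ) : slope cosh 0 w = (cosh w - 1) / w := by
  simp [slope_def_field]

theorem strictMonoOn_cosh_sub_one_div : StrictMonoOn (fun w => (cosh w - 1) / w) (Ioi 0) :=
  fun _ hx _ hy hxy => by
    simpa using strictConvexOn_cosh.secant_strict_mono (mem_univ 0) (mem_univ _) (mem_univ _)
      (ne_of_gt hx) (ne_of_gt hy) hxy

theorem tendsto_cosh_sub_one_div_nhdsGT_zero :
    Tendsto (fun w => (cosh w - 1) / w) (𝓝[>] 0) (𝓝 0) := by
  simpa [funext slope_cosh_zero] using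
    (hasDerivAt_cosh 0).tendsto_slope.mono_left (nhdsGT_le_nhdsNE 0)

theorem div_four_le_cosh_sub_one_div {w : ℝ} (hw : 0 < w) : w / 4 ≤ (cosh w - 1) / w := by
  rw [le_div_iff₀ hw, cosh_eq]
  nlinarith [quadratic_le_exp_of_nonneg hw.le, add_one_le_exp (-w)]

theorem existsUnique_pos_eq_cosh_sub_one_div {v : ℝ} (hv : 0 < v) :
    ∃! w : ℝ, 0 < w ∧ v = (cosh w - 1) / w := by
  obtain ⟨a, ha_lt, ha_pos⟩ :=
    ((tendsto_cosh_sub_one_div_nhdsGT_zero.eventually (gt_mem_nhds hv)).and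
      self_mem_nhdsWithin).exists
  set b := 4 * v + 4
  have hb_pos : 0 < b := by positivity
  have hb_ge : v ≤ (cosh b - 1) / b := by linarith [div_four_le_cosh_sub_one_div hb_pos]
  have hab : a ≤ b := by
    by_contra! hba
    linarith [strictMonoOn_cosh_sub_one_div hb_pos ha_pos hba]
  have hcont : ContinuousOn (fun w => (cosh w - 1) / w) (Icc a b) :=
    (continuous_cosh.sub continuous_const).continuousOn.div continuousOn_id
      fun w hw => (ha_pos.trans_le hw.1).ne'
  obtain ⟨w, hw, hwv⟩ := intermediate_value_Icc hab hcont ⟨ha_lt.le, hb_ge⟩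
  have hw_pos : 0 < w := ha_pos.trans_le hw.1
  exact ⟨w, ⟨hw_pos, hwv.symm⟩, fun u hu => strictMonoOn_cosh_sub_one_div.injOn hu.1 hw_pos
    (hu.2.symm.trans hwv.symm)⟩

theorem hasDerivAt_exp_travelingWave (w c x t : ℝ) :
    HasDerivAt (fun s => exp (w * (c * s - x))) (w * c * exp (w * (c * t - x))) t := by
  have h := (((hasDerivAt_id t).const_mul c).sub_const x).const_mul w
  simpa [mul_comm] using h.exp

theorem exp_sub_add_exp_add_sub_two_mul_exp (a w : ℝ) :
    exp (a - w) + exp (a + w) - 2 * exp a = 2 * (cosh w - 1) * exp a := by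
  rw [exp_sub, exp_add, cosh_eq, exp_neg]
  field_simp
  ring

theorem stmt9 (v : ℝ) (hv : 0 < v) :
    (∃! w : ℝ, 0 < w ∧ v = (Real.cosh w - 1) / w) ∧
    ∀ w : ℝ, 0 < w → v = (Real.cosh w - 1) / w →
      ∀ (t : ℝ) (x : ℤ),
        HasDerivAt (fun s : ℝ => Real.exp (w * (v * s - (x : ℝ))))
          ((1/2) * (Real.exp (w * (v * t - ((x + 1 : ℤ) : ℝ)))
            + Real.exp (w * (v * t - ((x - 1 : ℤ) : ℝ)))
            - 2 * Real.exp (w * (v * t - (x : ℝ))))) t := by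
  refine ⟨existsUnique_pos_eq_cosh_sub_one_div hv, fun w hw hvw t x => ?_⟩
  have hcosh : cosh w - 1 = v * w := by rw [hvw, div_mul_cancel₀ _ hw.ne']
  have hright : w * (v * t - ((x + 1 : ℤ) : ℝ)) = w * (v * t - x) - w := by push_cast; ring
  have hleft : w * (v * t - ((x - 1 : ℤ) : ℝ)) = w * (v * t - x) + w := by push_cast; ring
  convert hasDerivAt_exp_travelingWave w v x t using 1
  rw [hright, hleft, exp_sub_add_exp_add_sub_two_mul_exp, hcosh]
  ring
end
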